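/- arXiv:2104.12015 — 3 statements merged into one kernel-verified Lean document; each statement's English description precedes it below -/
import Mathlib

section
/- Let n ≥ 2 and e ≥ 1 be integers. The polynomial f(t) = 1 + t^e + t^{2e} + ... + t^{(n-1)e} (i.e. (t^{ne} - 1)/(t^e - 1)) is irreducible in ℤ[t] if and only if n is prime and e is a power of n (i.e. e = n^i for some i ≥ 0). -/
/-!
Since `(t^{ne} - 1) / (t^e - 1)` is the product of the cyclotomic polynomials `Φ_d` with
`d ∣ ne`, `d ∤ e`, and each `Φ_d` is irreducible, `f` is irreducible exactly when `ne` is the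
only such `d`, i.e. when every proper divisor of `ne` divides `e`. For a prime `q ∣ ne` the
proper divisor `ne / q` divides `e` only if `n ∣ q`, so `n` must be the only prime dividing `ne`.
-/

open Polynomial Finset

theorem geom_sum_X_pow_mul_eq_prod_cyclotomic (R : Type*) [CommRing R] {n e : ℕ}
    (hn : 0 < n) (he : 0 < e) :
    ∑ k ∈ range n, (X : R[X]) ^ (k * e) = ∏ d ∈ (n * e).divisors \ e.divisors, cyclotomic d R := by
  have hsub : e.divisors ⊆ (n * e).divisors :=
    Nat.divisors_subset_of_dvd (by positivity) (dvd_mul_left e n)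
  refine (monic_X_pow_sub_C (1 : R) he.ne').isRegular.right ?_
  simp only [C_1]
  calc (∑ k ∈ range n, (X : R[X]) ^ (k * e)) * (X ^ e - 1)
      = X ^ (n * e) - 1 := by
        simp only [pow_mul']
        rw [geom_sum_mul, ← pow_mul, mul_comm e n]
    _ = (∏ d ∈ (n * e).divisors \ e.divisors, cyclotomic d R) * (X ^ e - 1) := by
      rw [← prod_cyclotomic_eq_X_pow_sub_one he, ← prod_cyclotomic_eq_X_pow_sub_one (by positivity),
        prod_sdiff hsub]

theorem irreducible_prod_cyclotomic_iff {S : Finset ℕ} (hS : 0 ∉ S) :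
    Irreducible (∏ d ∈ S, cyclotomic d ℤ) ↔ #S = 1 := by
  have hpos : ∀ d ∈ S, 0 < d := fun d hd => Nat.pos_of_ne_zero (ne_of_mem_of_not_mem hd hS)
  refine ⟨fun hirr => ?_, fun hcard => ?_⟩
  · obtain hS | hS | hS : #S = 0 ∨ #S = 1 ∨ 1 < #S := by omega
    · rw [card_eq_zero.1 hS, prod_empty] at hirr
      exact absurd hirr not_irreducible_one
    · exact hS
    · obtain ⟨a, ha, b, hb, hab⟩ := one_lt_card.1 hS
      rw [← mul_prod_erase S _ ha] at hirr
      refine absurd (hirr.isUnit_or_isUnit rfl) ?_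
      rw [IsUnit.prod_iff, not_or, not_forall₂]
      exact ⟨(cyclotomic.irreducible (hpos a ha)).not_isUnit,
        b, mem_erase.2 ⟨hab.symm, hb⟩, (cyclotomic.irreducible (hpos b hb)).not_isUnit⟩
  · obtain ⟨d, rfl⟩ := card_eq_one.1 hcard
    rw [prod_singleton]
    exact cyclotomic.irreducible (hpos d (mem_singleton_self d))

theorem Nat.prime_and_eq_pow_of_forall_proper_dvd_mul {n e : ℕ} (hn : 2 ≤ n) (he : e ≠ 0)
    (h : ∀ d, d ∣ n * e → d ≠ n * e → d ∣ e) : n.Prime ∧ ∃ i, e = n ^ i := by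
  have prime_dvd_eq : ∀ q, q.Prime → q ∣ n * e → q = n := by
    rintro q hq ⟨m, hm⟩
    have hm0 : m ≠ 0 := by rintro rfl; simp at hm; omega
    obtain ⟨k, hk⟩ := h m (Dvd.intro_left q hm.symm) (by nlinarith [hq.two_le, Nat.pos_of_ne_zero hm0])
    have hqk : q = n * k := by
      apply Nat.eq_of_mul_eq_mul_right (Nat.pos_of_ne_zero hm0)
      rw [← hm, hk]; ring
    exact ((hq.eq_one_or_self_of_dvd n ⟨k, hqk⟩).resolve_left (by omega)).symm
  have hprime : n.Prime := by
    have hmin : n.minFac.Prime := Nat.minFac_prime (by omega)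
    rwa [prime_dvd_eq _ hmin (dvd_mul_of_dvd_left n.minFac_dvd e)] at hmin
  exact ⟨hprime, _, Nat.eq_prime_pow_of_unique_prime_dvd he
    fun hq hqe => prime_dvd_eq _ hq (dvd_mul_of_dvd_right hqe n)⟩

theorem Nat.sdiff_divisors_prime_pow_succ {p : ℕ} (hp : p.Prime) (i : ℕ) :
    (p ^ (i + 1)).divisors \ (p ^ i).divisors = {p ^ (i + 1)} := by
  ext d
  simp only [mem_sdiff, Nat.mem_divisors, mem_singleton, Nat.dvd_prime_pow hp]
  constructor
  · rintro ⟨⟨⟨j, hj, rfl⟩, -⟩, hdi⟩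
    obtain rfl : j = i + 1 := by
      by_contra hj'
      exact hdi ⟨⟨j, by omega, rfl⟩, pow_ne_zero _ hp.ne_zero⟩
    rfl
  · rintro rfl
    refine ⟨⟨⟨i + 1, le_rfl, rfl⟩, pow_ne_zero _ hp.ne_zero⟩, fun ⟨⟨j, hj, hij⟩, _⟩ => ?_⟩
    have := Nat.pow_right_injective hp.two_le hij
    omega

theorem Nat.card_sdiff_divisors_mul_eq_one_iff {n e : ℕ} (hn : 2 ≤ n) (he : e ≠ 0) :
    #((n * e).divisors \ e.divisors) = 1 ↔ n.Prime ∧ ∃ i, e = n ^ i := by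
  have hne : n * e ≠ 0 := by positivity
  have hmem : n * e ∈ (n * e).divisors \ e.divisors := by
    simp only [mem_sdiff, Nat.mem_divisors, not_and]
    refine ⟨⟨dvd_rfl, hne⟩, fun hdvd _ => ?_⟩
    have := Nat.le_of_dvd (Nat.pos_of_ne_zero he) hdvd
    nlinarith [Nat.pos_of_ne_zero he]
  rw [card_eq_one]
  constructor
  · rintro ⟨a, ha⟩
    rw [ha, mem_singleton] at hmem
    subst hmem
    refine Nat.prime_and_eq_pow_of_forall_proper_dvd_mul hn he fun d hd hdne => ?_
    by_contra hde
    have : d ∈ (n * e).divisors \ e.divisors := by simp [hd, hde, hne]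
    exact hdne (by simpa [ha] using this)
  · rintro ⟨hp, i, rfl⟩
    exact ⟨_, by rw [← pow_succ', Nat.sdiff_divisors_prime_pow_succ hp]⟩

/-- Let `n ≥ 2` and `e ≥ 1` be integers. The polynomial
`f(t) = 1 + t^e + t^{2e} + ⋯ + t^{(n-1)e}` is irreducible in `ℤ[t]` if and only if
`n` is prime and `e` is a power of `n`. -/
theorem geom_poly_irreducible_iff (n e : ℕ) (hn : 2 ≤ n) (he : 1 ≤ e) :
    Irreducible (∑ k ∈ Finset.range n, (Polynomial.X : Polynomial ℤ) ^ (k * e)) ↔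
      Nat.Prime n ∧ ∃ i : ℕ, e = n ^ i := by
  rw [geom_sum_X_pow_mul_eq_prod_cyclotomic ℤ (by omega) he,
    irreducible_prod_cyclotomic_iff (by simp; omega),
    Nat.card_sdiff_divisors_mul_eq_one_iff hn (by omega)]
end

section
/- Let q = r^e where r is prime and let n ≥ 2. If p = (q^n − 1)/(q − 1) is prime, then n is prime and e is a power of n. -/
/-!
Write `S_n(x) = 1 + x + ⋯ + x^{n-1}`. Splitting `[0, a b)` into `b` blocks of length `a` gives
`S_{ab}(x) = S_a(x) S_b(x^a)`, so `S_a(x) ∣ S_n(x)` whenever `a ∣ n`; since `S_m(x)` is strictly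
increasing in `m`, primality of `S_n(q)` forces `n` to be prime. If moreover `e` had a prime
factor `s ≠ n`, write `q = x^s` with `x ≥ 2`. Since `gcd (x^a - 1) (x^b - 1) = x^{gcd a b} - 1`,
the sums `S_n(x)` and `S_s(x)` are coprime, and both divide `S_{ns}(x) = S_s(x) S_n(x^s)`, so
`S_n(x)` is a divisor of the prime `S_n(q)` strictly between `1` and `S_n(q)`.
-/

open Finset

section CommSemiring

variable {R : Type*} [CommSemiring R]

theorem geom_sum_mul_eq_mul_geom_sum_pow (x : R) (a b : ℕ) :
    ∑ k ∈ range (a * b), x ^ k =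
      (∑ k ∈ range a, x ^ k) * ∑ j ∈ range b, (x ^ a) ^ j := by
  induction b with
  | zero => simp
  | succ b ih =>
    have block : ∀ i, x ^ (a * b + i) = x ^ i * (x ^ a) ^ b := fun i => by
      rw [pow_add, ← pow_mul, mul_comm]
    rw [Nat.mul_succ, sum_range_add, ih, sum_range_succ, mul_add,
      sum_congr rfl fun i _ => block i, ← sum_mul]

theorem geom_sum_dvd_geom_sum_of_dvd (x : R) {a n : ℕ} (h : a ∣ n) :
    ∑ k ∈ range a, x ^ k ∣ ∑ k ∈ range n, x ^ k := by
  obtain ⟨b, rfl⟩ := h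
  exact ⟨_, geom_sum_mul_eq_mul_geom_sum_pow x a b⟩

end CommSemiring

namespace Nat

theorem geom_sum_strictMono {x : ℕ} (hx : 0 < x) : StrictMono fun m => ∑ k ∈ range m, x ^ k :=
  strictMono_nat_of_lt_succ fun m => by
    rw [sum_range_succ]
    exact Nat.lt_add_of_pos_right (Nat.pow_pos hx)

theorem geom_sum_strictMono_base {n : ℕ} (hn : 2 ≤ n) :
    StrictMono fun x : ℕ => ∑ k ∈ range n, x ^ k :=
  fun x y hxy => sum_lt_sum (fun k _ => Nat.pow_le_pow_left hxy.le k)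
    ⟨1, mem_range.mpr hn, by simpa using hxy⟩

theorem gcd_geom_sum {x : ℕ} (hx : 2 ≤ x) (a b : ℕ) :
    gcd (∑ k ∈ range a, x ^ k) (∑ k ∈ range b, x ^ k) =
      ∑ k ∈ range (gcd a b), x ^ k := by
  have hmul : ∀ m, (x - 1) * ∑ k ∈ range m, x ^ k = x ^ m - 1 := fun m => by
    rw [mul_comm, geom_sum_mul_of_one_le (by omega)]
  apply Nat.eq_of_mul_eq_mul_left (show 0 < x - 1 by omega)
  rw [← Nat.gcd_mul_left, hmul, hmul, hmul, pow_sub_one_gcd_pow_sub_one]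

theorem geom_sum_dvd_geom_sum_pow_of_coprime {x n s : ℕ} (hx : 2 ≤ x) (hns : Coprime n s) :
    ∑ k ∈ range n, x ^ k ∣ ∑ k ∈ range n, (x ^ s) ^ k := by
  have hcop : Coprime (∑ k ∈ range n, x ^ k) (∑ k ∈ range s, x ^ k) := by
    rw [Coprime, gcd_geom_sum hx, hns.gcd_eq_one, sum_range_one, pow_zero]
  refine hcop.dvd_of_dvd_mul_left ?_
  rw [← geom_sum_mul_eq_mul_geom_sum_pow, mul_comm]
  exact geom_sum_dvd_geom_sum_of_dvd x (dvd_mul_right n s)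

theorem prime_of_prime_geom_sum {x n : ℕ} (hx : 0 < x) (hp : (∑ k ∈ range n, x ^ k).Prime) :
    n.Prime := by
  have hinj := (geom_sum_strictMono hx).injective
  have hn : 2 ≤ n := by
    by_contra! h
    interval_cases n <;> simp [Nat.not_prime_zero, Nat.not_prime_one] at hp
  refine prime_def.mpr ⟨hn, fun a ha => ?_⟩
  rcases hp.eq_one_or_self_of_dvd _ (geom_sum_dvd_geom_sum_of_dvd x ha) with h | h
  · exact Or.inl (hinj (h.trans (by simp)))
  · exact Or.inr (hinj h)

theorem eq_one_of_prime_geom_sum_pow {x n s : ℕ} (hx : 2 ≤ x) (hn : 2 ≤ n) (hns : Coprime n s)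
    (hp : (∑ k ∈ range n, (x ^ s) ^ k).Prime) : s = 1 := by
  have hlt : 1 < ∑ k ∈ range n, x ^ k := by
    simpa using geom_sum_strictMono (by omega : 0 < x) (by omega : 1 < n)
  rcases hp.eq_one_or_self_of_dvd _ (geom_sum_dvd_geom_sum_pow_of_coprime hx hns) with h | h
  · omega
  · have hxs : x ^ s = x := (geom_sum_strictMono_base hn |>.injective h).symm
    exact Nat.pow_right_injective hx (by simpa using hxs)

end Nat

theorem projective_prime_necessary_general (r e n : ℕ) (hr : Nat.Prime r) (he : 1 ≤ e)
    (hp : Nat.Prime (∑ k ∈ Finset.range n, (r ^ e) ^ k)) :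
    Nat.Prime n ∧ ∃ i : ℕ, e = n ^ i := by
  have hn : n.Prime := Nat.prime_of_prime_geom_sum (pow_pos hr.pos e) hp
  refine ⟨hn, _, Nat.eq_prime_pow_of_unique_prime_dvd (by omega) fun {s} hs hse => ?_⟩
  by_contra hsn
  obtain ⟨m, rfl⟩ := hse
  have hx : 2 ≤ r ^ m := hr.two_le.trans (Nat.le_self_pow (by rintro rfl; omega) r)
  rw [mul_comm, pow_mul] at hp
  exact hs.one_lt.ne' (Nat.eq_one_of_prime_geom_sum_pow hx hn.two_le
    ((Nat.coprime_primes hn hs).mpr (Ne.symm hsn)) hp)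

/-- Let `q = r^e` where `r` is prime, and let `n ≥ 2`. If
`p = (q^n − 1)/(q − 1) = 1 + q + ⋯ + q^{n-1}` is prime, then `n` is prime and `e` is a
power of `n`. -/
theorem projective_prime_necessary (r e n : ℕ) (hr : Nat.Prime r) (he : 1 ≤ e) (hn : 2 ≤ n)
    (hp : Nat.Prime (∑ k ∈ Finset.range n, (r ^ e) ^ k)) :
    Nat.Prime n ∧ ∃ i : ℕ, e = n ^ i :=
  projective_prime_necessary_general r e n hr he hp
end

section
/- For a Fermat prime p = 2^{2^k} + 1 with q = 2^{2^k} ≥ 4, in the action of PSL_2(q) on P^1(F_q) an element of order 3 has cycle type 3^{(q−1)/3}1^2, an involution has cycle type 2^{q/2}1^1, and an element of order p = q + 1 is a (q+1)-cycle; the corresponding dessin of degree p has Euler characteristic (q−1)/3 + 2 + q/2 + 1 − (q+1) + 1 = (16 − q)/6 and genus (q − 4)/12 = (p − 5)/12. -/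
/-!
An element of `SL₂(K)` fixing three distinct points of `ℙ¹(K)` has three pairwise independent
eigenvectors in a plane, so it is a scalar and acts trivially: a nontrivial element fixes at most
two of the `q + 1` points. An element of prime order `ℓ` is a product of disjoint `ℓ`-cycles, so
the size of its support is a multiple of `ℓ` in `{q - 1, q, q + 1}`. Since `q + 1` is a prime
`≥ 5` and `q` is a prime power, `q` is even and `q ≡ 1 (mod 3)`, which pins the support down for `ℓ = 2, 3`;
for `ℓ = q + 1` the element is a single cycle.
-/

open Matrix

instance {K : Type*} [Field K] [Fintype K] :
    Finite (Projectivization K (Fin 2 → K)) := by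
  unfold Projectivization
  infer_instance

noncomputable instance {K : Type*} [Field K] [Fintype K] :
    Fintype (Projectivization K (Fin 2 → K)) := Fintype.ofFinite _

noncomputable instance {K : Type*} [Field K] :
    DecidableEq (Projectivization K (Fin 2 → K)) := Classical.decEq _

/-- The permutation of the projective line `ℙ¹(K)` induced by an element of `SL₂(K)`. -/
noncomputable def mobiusPerm {K : Type*} [Field K]
    (g : Matrix.SpecialLinearGroup (Fin 2) K) :
    Equiv.Perm (Projectivization K (Fin 2 → K)) where
  toFun := Projectivization.map
    ((Matrix.SpecialLinearGroup.toLin' g).toLinearMap)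
    (Matrix.SpecialLinearGroup.toLin' g).injective
  invFun := Projectivization.map
    ((Matrix.SpecialLinearGroup.toLin' g⁻¹).toLinearMap)
    (Matrix.SpecialLinearGroup.toLin' g⁻¹).injective
  left_inv := fun x => by
    induction x using Projectivization.ind with
    | h v hv =>
      rw [Projectivization.map_mk, Projectivization.map_mk]
      congr 1
      rw [map_inv]
      exact (Matrix.SpecialLinearGroup.toLin' g).symm_apply_apply v
  right_inv := fun x => by
    induction x using Projectivization.ind with
    | h v hv =>
      rw [Projectivization.map_mk, Projectivization.map_mk]
      congr 1
      rw [map_inv]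
      exact (Matrix.SpecialLinearGroup.toLin' g).apply_symm_apply v

open Module Function Finset
open scoped LinearAlgebra.Projectivization

namespace LinearMap

variable {K V : Type*} [Field K] [AddCommGroup V] [Module K V]

theorem eq_smul_id_of_three_eigenvectors (hV : finrank K V = 2) (f : V →ₗ[K] V)
    {u v w : V} {a b c : K} (huv : LinearIndependent K ![u, v])
    (huw : LinearIndependent K ![u, w]) (hvw : LinearIndependent K ![v, w])
    (hu : f u = a • u) (hv : f v = b • v) (hw : f w = c • w) :
    f = c • LinearMap.id := by
  have hspan : Submodule.span K (Set.range ![u, v]) = ⊤ :=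
    huv.span_eq_top_of_card_eq_finrank (by simp [hV])
  obtain ⟨s, t, rfl⟩ : ∃ s t : K, s • u + t • v = w := by
    rw [← Submodule.mem_span_pair, ← range_cons_cons_empty u v ![], hspan]
    exact Submodule.mem_top
  have hs : s ≠ 0 := by
    rintro rfl
    exact (LinearIndependent.pair_iff' (huv.ne_zero 1)).1 hvw t (by simp)
  have ht : t ≠ 0 := by
    rintro rfl
    exact (LinearIndependent.pair_iff' (huv.ne_zero 0)).1 huw s (by simp)
  have hcoeff : (s * a) • u + (t * b) • v = (s * c) • u + (t * c) • v := by
    rw [map_add, map_smul, map_smul, hu, hv, smul_add] at hw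
    simpa only [mul_smul, smul_comm c] using hw
  obtain ⟨hac, hbc⟩ := huv.eq_of_pair hcoeff
  refine ext_on_range hspan fun i => ?_
  fin_cases i
  · simp [hu, mul_left_cancel₀ hs hac]
  · simp [hv, mul_left_cancel₀ ht hbc]

end LinearMap

namespace Projectivization

variable {K V : Type*} [Field K] [AddCommGroup V] [Module K V]

theorem map_eq_self_iff {f : V →ₗ[K] V} (hf : Injective f) (x : ℙ K V) :
    map f hf x = x ↔ ∃ c : K, f x.rep = c • x.rep := by
  have hx := map_mk f hf x.rep x.rep_nonzero
  rw [mk_rep] at hx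
  rw [hx]
  conv_lhs => rhs; rw [← mk_rep x]
  rw [mk_eq_mk_iff']
  exact exists_congr fun c => eq_comm

theorem map_eq_id_of_three_fixed (hV : finrank K V = 2) {f : V →ₗ[K] V} (hf : Injective f)
    {x y z : ℙ K V} (hxy : x ≠ y) (hxz : x ≠ z) (hyz : y ≠ z)
    (hx : map f hf x = x) (hy : map f hf y = y) (hz : map f hf z = z) :
    map f hf = id := by
  obtain ⟨a, ha⟩ := (map_eq_self_iff hf x).1 hx
  obtain ⟨b, hb⟩ := (map_eq_self_iff hf y).1 hy
  obtain ⟨c, hc⟩ := (map_eq_self_iff hf z).1 hz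
  have hscalar := f.eq_smul_id_of_three_eigenvectors hV (linearIndependent_pair_iff_ne.2 hxy)
    (linearIndependent_pair_iff_ne.2 hxz) (linearIndependent_pair_iff_ne.2 hyz) ha hb hc
  funext w
  induction w using ind with
  | h v hv => rw [map_mk, id, mk_eq_mk_iff']; exact ⟨c, by simp [hscalar]⟩

theorem card_fin_two_fun [Fintype K] :
    Fintype.card (ℙ K (Fin 2 → K)) = Fintype.card K + 1 := by
  simp only [← Nat.card_eq_fintype_card]
  exact card_of_finrank_two K _ (finrank_fin_fun K)

end Projectivization

theorem Equiv.Perm.exists_cycleType_eq_replicate_of_prime_order {α : Type*} [Fintype α]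
    [DecidableEq α] {σ : Perm α} (hσ : (orderOf σ).Prime) :
    ∃ n, σ.cycleType = Multiset.replicate n (orderOf σ) ∧ #σ.support = n * orderOf σ := by
  obtain ⟨n, hn⟩ := cycleType_prime_order hσ
  exact ⟨n + 1, hn, by rw [← sum_cycleType, hn, Multiset.sum_replicate, smul_eq_mul]⟩

section mobiusPerm

variable {K : Type*} [Field K] [Fintype K]

theorem card_le_card_support_mobiusPerm_add_one (g : SpecialLinearGroup (Fin 2) K)
    (hg : mobiusPerm g ≠ 1) : Fintype.card K ≤ #(mobiusPerm g).support + 1 := by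
  have hfixed : #(mobiusPerm g).supportᶜ ≤ 2 := by
    by_contra! hgt
    obtain ⟨x, hx, y, hy, z, hz, hxy, hxz, hyz⟩ := two_lt_card.1 hgt
    simp only [mem_compl, Equiv.Perm.notMem_support] at hx hy hz
    exact hg <| Equiv.ext <| congrFun <|
      Projectivization.map_eq_id_of_three_fixed (finrank_fin_fun K)
        (SpecialLinearGroup.toLin' g).injective hxy hxz hyz hx hy hz
  have := card_compl (mobiusPerm g).support
  rw [Projectivization.card_fin_two_fun] at this
  omega

theorem exists_cycleType_mobiusPerm_eq_replicate (g : SpecialLinearGroup (Fin 2) K)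
    (hg : (orderOf (mobiusPerm g)).Prime) :
    ∃ n, (mobiusPerm g).cycleType = Multiset.replicate n (orderOf (mobiusPerm g)) ∧
      Fintype.card K ≤ n * orderOf (mobiusPerm g) + 1 ∧
      n * orderOf (mobiusPerm g) ≤ Fintype.card K + 1 := by
  obtain ⟨n, hn, hsupp⟩ := Equiv.Perm.exists_cycleType_eq_replicate_of_prime_order hg
  refine ⟨n, hn, hsupp ▸ card_le_card_support_mobiusPerm_add_one g
    (mt orderOf_eq_one_iff.2 hg.ne_one), ?_⟩
  rw [← hsupp, ← Projectivization.card_fin_two_fun]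
  exact card_le_univ _

end mobiusPerm

theorem FiniteField.eq_of_prime_dvd_card {F : Type*} [Field F] [Fintype F] {ℓ ℓ' : ℕ}
    (hℓ : ℓ.Prime) (hℓ' : ℓ'.Prime) (h : ℓ ∣ Fintype.card F) (h' : ℓ' ∣ Fintype.card F) :
    ℓ = ℓ' := by
  obtain ⟨r, -, n, hr, hcard⟩ := FiniteField.card' F
  rw [hcard] at h h'
  exact ((Nat.prime_dvd_prime_iff_eq hℓ hr).1 (hℓ.dvd_of_dvd_pow h)).trans
    ((Nat.prime_dvd_prime_iff_eq hℓ' hr).1 (hℓ'.dvd_of_dvd_pow h')).symm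

theorem FiniteField.three_dvd_card_sub_one {F : Type*} [Field F] [Fintype F]
    (h4 : 4 ≤ Fintype.card F) (hp : (Fintype.card F + 1).Prime) : 3 ∣ Fintype.card F - 1 := by
  by_contra h3
  obtain h | h : 3 ∣ Fintype.card F ∨ 3 ∣ Fintype.card F + 1 := by omega
  · have h2 : 2 ∣ Fintype.card F := by simpa using (hp.even_sub_one (by omega)).two_dvd
    exact absurd (eq_of_prime_dvd_card Nat.prime_three Nat.prime_two h h2) (by norm_num)
  · have := (Nat.prime_dvd_prime_iff_eq Nat.prime_three hp).1 h
    omega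

theorem fermat_prime_dessin_general (q p : ℕ) (hq4 : 4 ≤ q)
    (hp : p = q + 1) (hpp : Nat.Prime p)
    (F : Type) [Field F] [Fintype F] (hF : Fintype.card F = q) :
    (∀ g : Matrix.SpecialLinearGroup (Fin 2) F, orderOf (mobiusPerm g) = 3 →
        (mobiusPerm g).cycleType = Multiset.replicate ((q - 1) / 3) 3) ∧
      (∀ g : Matrix.SpecialLinearGroup (Fin 2) F, orderOf (mobiusPerm g) = 2 →
        (mobiusPerm g).cycleType = Multiset.replicate (q / 2) 2) ∧
      (∀ g : Matrix.SpecialLinearGroup (Fin 2) F, orderOf (mobiusPerm g) = p →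
        (mobiusPerm g).cycleType = {p}) ∧
      ((q : ℚ) - 1) / 3 + 2 + (q : ℚ) / 2 + 1 - ((q : ℚ) + 1) + 1 = (16 - (q : ℚ)) / 6 ∧
      1 - ((16 - (q : ℚ)) / 6) / 2 = ((q : ℚ) - 4) / 12 ∧
      ((q : ℚ) - 4) / 12 = ((p : ℚ) - 5) / 12 := by
  subst hF hp
  have h2 : 2 ∣ Fintype.card F := by simpa using (hpp.even_sub_one (by omega)).two_dvd
  have h3 := FiniteField.three_dvd_card_sub_one hq4 hpp
  refine ⟨fun g hg => ?_, fun g hg => ?_, fun g hg => ?_, by ring, by ring, by push_cast; ring⟩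
  · obtain ⟨n, hn, hlo, hhi⟩ := exists_cycleType_mobiusPerm_eq_replicate g
      (by rw [hg]; exact Nat.prime_three)
    rw [hg] at hn hlo hhi
    rw [hn]
    congr 1
    omega
  · obtain ⟨n, hn, hlo, hhi⟩ := exists_cycleType_mobiusPerm_eq_replicate g
      (by rw [hg]; exact Nat.prime_two)
    rw [hg] at hn hlo hhi
    rw [hn]
    congr 1
    omega
  · have hcycle := Equiv.Perm.isCycle_of_prime_order' (hg ▸ hpp)
      (by rw [Projectivization.card_fin_two_fun, hg]; omega)
    rw [hcycle.cycleType, ← hcycle.orderOf, hg]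

/-- For a Fermat prime `p = 2^{2^k} + 1` with `q = 2^{2^k} ≥ 4`, in the action of
`PSL₂(q)` on `ℙ¹(𝔽_q)` an element of order 3 has cycle type `3^{(q−1)/3}1²`, an
involution has cycle type `2^{q/2}1¹`, and an element of order `p = q + 1` is a
`(q+1)`-cycle; the corresponding dessin of degree `p` has Euler characteristic
`(q−1)/3 + 2 + q/2 + 1 − (q+1) + 1 = (16 − q)/6` and genus `(q − 4)/12 = (p − 5)/12`. -/
theorem fermat_prime_dessin (k q p : ℕ) (hq : q = 2 ^ 2 ^ k) (hq4 : 4 ≤ q)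
    (hp : p = q + 1) (hpp : Nat.Prime p)
    (F : Type) [Field F] [Fintype F] (hF : Fintype.card F = q) :
    (∀ g : Matrix.SpecialLinearGroup (Fin 2) F, orderOf (mobiusPerm g) = 3 →
        (mobiusPerm g).cycleType = Multiset.replicate ((q - 1) / 3) 3) ∧
      (∀ g : Matrix.SpecialLinearGroup (Fin 2) F, orderOf (mobiusPerm g) = 2 →
        (mobiusPerm g).cycleType = Multiset.replicate (q / 2) 2) ∧
      (∀ g : Matrix.SpecialLinearGroup (Fin 2) F, orderOf (mobiusPerm g) = p →
        (mobiusPerm g).cycleType = {p}) ∧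
      ((q : ℚ) - 1) / 3 + 2 + (q : ℚ) / 2 + 1 - ((q : ℚ) + 1) + 1 = (16 - (q : ℚ)) / 6 ∧
      1 - ((16 - (q : ℚ)) / 6) / 2 = ((q : ℚ) - 4) / 12 ∧
      ((q : ℚ) - 4) / 12 = ((p : ℚ) - 5) / 12 :=
  fermat_prime_dessin_general q p hq4 hp hpp F hF
end
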